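/- arXiv:math/0108197 — 9 statements merged into one kernel-verified Lean document; each statement's English description precedes it below -/
import Mathlib

section
/- Let Q : J → Matrix(n,n,ℂ) be a continuous family of Hermitian matrices on an open interval J ⊆ ℝ such that the rank of Q(φ) is constant on J. Then the signature of Q(φ) is locally constant (hence constant) on J. -/
/-! The number of positive eigenvalues is lower semicontinuous on Hermitian matrices. If
`re ⟪A x, x⟫ ≥ c ‖x‖²` on the span `W` of the positive eigenvectors of `A`, then every `B` with
`‖B - A‖ < c` is positive definite on `W`; such a subspace meets the span of the nonpositive
eigenvectors of `B` trivially, so `B` has at least `dim W` positive eigenvalues. Applied to `-A`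
this gives the same for negative eigenvalues. The two counts add up to the rank, so when the rank
is constant both are locally constant, hence constant on the connected interval. -/

open scoped Classical

/-- The signature of a complex matrix: number of positive minus number of negative
eigenvalues when the matrix is Hermitian, and `0` otherwise. -/
noncomputable def matrixSignature {m : Type*} [Fintype m] [DecidableEq m]
    (A : Matrix m m ℂ) : ℤ :=
  if h : A.IsHermitian then
    ((Finset.univ.filter fun i => 0 < h.eigenvalues i).card : ℤ) -
      ((Finset.univ.filter fun i => h.eigenvalues i < 0).card : ℤ)
  else 0

open Finset Filter Topology RCLike Module Matrix
open scoped InnerProductSpace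

section Eigenbasis

variable {𝕜 E ι : Type*} [RCLike 𝕜] [NormedAddCommGroup E] [InnerProductSpace 𝕜 E] [Fintype ι]
  {b : OrthonormalBasis ι 𝕜 E} {μ : ι → ℝ}

theorem re_inner_apply_self_eq_sum {T : E →ₗ[𝕜] E} (hb : ∀ i, T (b i) = (μ i : 𝕜) • b i)
    (x : E) : re ⟪T x, x⟫_𝕜 = ∑ i, μ i * ‖⟪b i, x⟫_𝕜‖ ^ 2 := by
  have hTx : T x = ∑ i, ((μ i : 𝕜) * ⟪b i, x⟫_𝕜) • b i := by
    conv_lhs => rw [← b.sum_repr' x]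
    simp [map_sum, hb, smul_smul, mul_comm]
  rw [hTx, sum_inner, map_sum]
  refine Finset.sum_congr rfl fun i _ => ?_
  rw [inner_smul_left, map_mul (starRingEnd 𝕜), conj_ofReal, mul_assoc, RCLike.conj_mul,
    ← ofReal_pow, ← ofReal_mul, ofReal_re]

theorem finrank_le_card_pos_of_forall_re_inner_pos {T : E →ₗ[𝕜] E}
    (hb : ∀ i, T (b i) = (μ i : 𝕜) • b i) (W : Submodule 𝕜 E)
    (hW : ∀ x ∈ W, x ≠ 0 → 0 < re ⟪T x, x⟫_𝕜) : finrank 𝕜 W ≤ #{i | 0 < μ i} := by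
  let coords : W →ₗ[𝕜] {i // 0 < μ i} → 𝕜 :=
    LinearMap.pi (fun i => innerₛₗ 𝕜 (b i)) ∘ₗ W.subtype
  have hcoords : Function.Injective coords := by
    rw [← LinearMap.ker_eq_bot, LinearMap.ker_eq_bot']
    intro x hx
    by_contra hx0
    have hvanish : ∀ i, 0 < μ i → ⟪b i, (x : E)⟫_𝕜 = 0 := fun i hi => congr_fun hx ⟨i, hi⟩
    refine (hW x x.2 (by simpa using hx0)).not_ge ?_
    rw [re_inner_apply_self_eq_sum hb]
    refine Fintype.sum_nonpos fun i => ?_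
    by_cases hi : 0 < μ i
    · simp [hvanish i hi]
    · exact mul_nonpos_of_nonpos_of_nonneg (not_lt.mp hi) (by positivity)
  simpa [Fintype.card_subtype] using LinearMap.finrank_le_finrank_of_injective hcoords

theorem exists_finrank_eq_card_pos_forall_le_re_inner {T : E →ₗ[𝕜] E}
    (hb : ∀ i, T (b i) = (μ i : 𝕜) • b i) :
    ∃ W : Submodule 𝕜 E, finrank 𝕜 W = #{i | 0 < μ i} ∧
      ∃ c > 0, ∀ x ∈ W, c * ‖x‖ ^ 2 ≤ re ⟪T x, x⟫_𝕜 := by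
  have hgap : ∀ᶠ c in 𝓝[>] (0 : ℝ), ∀ i, 0 < μ i → c ≤ μ i :=
    eventually_all.2 fun i => eventually_imp_distrib_left.2 fun hi =>
      (eventually_le_nhds hi).filter_mono nhdsWithin_le_nhds
  obtain ⟨c, hcμ, hc⟩ := (hgap.and self_mem_nhdsWithin).exists
  let W := Submodule.span 𝕜 (Set.range fun i : {i // 0 < μ i} => b i)
  have hperp : ∀ x ∈ W, ∀ i, ¬ 0 < μ i → ⟪b i, x⟫_𝕜 = 0 := by
    intro x hx i hi
    refine (Submodule.span_le (p := LinearMap.ker (innerₛₗ 𝕜 (b i)))).2 ?_ hx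
    rintro _ ⟨j, rfl⟩
    exact b.inner_eq_zero (fun hij => hi (hij ▸ j.2))
  refine ⟨W, ?_, c, hc, fun x hx => ?_⟩
  · exact (finrank_span_eq_card
      (b.orthonormal.linearIndependent.comp _ Subtype.val_injective)).trans (Fintype.card_subtype _)
  · rw [re_inner_apply_self_eq_sum hb, ← b.sum_sq_norm_inner_right, Finset.mul_sum]
    refine Finset.sum_le_sum fun i _ => ?_
    by_cases hi : 0 < μ i
    · exact mul_le_mul_of_nonneg_right (hcμ i hi) (by positivity)
    · simp [hperp x hx i hi]

theorem eventually_card_pos_le {ι' : Type*} [Fintype ι'] {T : E →L[𝕜] E}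
    (hb : ∀ i, T (b i) = (μ i : 𝕜) • b i) :
    ∀ᶠ S in 𝓝 T, ∀ (b' : OrthonormalBasis ι' 𝕜 E) (μ' : ι' → ℝ),
      (∀ i, S (b' i) = (μ' i : 𝕜) • b' i) → #{i | 0 < μ i} ≤ #{i | 0 < μ' i} := by
  obtain ⟨W, hWdim, c, hc, hW⟩ :=
    exists_finrank_eq_card_pos_forall_le_re_inner (T := T.toLinearMap) hb
  filter_upwards [Metric.ball_mem_nhds T hc] with S hS b' μ' hb'
  rw [← hWdim]
  refine finrank_le_card_pos_of_forall_re_inner_pos (T := S.toLinearMap) hb' W fun x hx hx0 => ?_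
  have hpert : -(‖S - T‖ * ‖x‖ ^ 2) ≤ re ⟪(S - T) x, x⟫_𝕜 := by
    refine neg_le_of_abs_le ((abs_re_le_norm _).trans ?_)
    calc ‖⟪(S - T) x, x⟫_𝕜‖ ≤ ‖(S - T) x‖ * ‖x‖ := norm_inner_le_norm _ _
      _ ≤ ‖S - T‖ * ‖x‖ * ‖x‖ := by gcongr; exact (S - T).le_opNorm x
      _ = ‖S - T‖ * ‖x‖ ^ 2 := by ring
  have hsplit : re ⟪S x, x⟫_𝕜 = re ⟪T x, x⟫_𝕜 + re ⟪(S - T) x, x⟫_𝕜 := by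
    simp [inner_sub_left]
  have hgain : ‖S - T‖ * ‖x‖ ^ 2 < c * ‖x‖ ^ 2 := by
    gcongr
    rwa [← dist_eq_norm]
  have hT := hW x hx
  simp only [ContinuousLinearMap.coe_coe] at hT ⊢
  linarith

end Eigenbasis

namespace Matrix.IsHermitian

variable {𝕜 n : Type*} [RCLike 𝕜] [Fintype n] [DecidableEq n] {A : Matrix n n 𝕜}

theorem toEuclideanCLM_eigenvectorBasis (hA : A.IsHermitian) (i : n) :
    toEuclideanCLM (n := n) (𝕜 := 𝕜) A (hA.eigenvectorBasis i) =
      (hA.eigenvalues i : 𝕜) • hA.eigenvectorBasis i :=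
  WithLp.ofLp_injective 2 (by simpa using hA.mulVec_eigenvectorBasis i)

theorem card_pos_add_card_neg (hA : A.IsHermitian) :
    #{i | 0 < hA.eigenvalues i} + #{i | hA.eigenvalues i < 0} = A.rank := by
  rw [hA.rank_eq_card_non_zero_eigs, Fintype.card_subtype, ← Finset.card_union_of_disjoint
    (Finset.disjoint_filter.2 fun i _ h h' => h.not_gt h'), ← Finset.filter_or]
  simp_rw [ne_iff_lt_or_gt, or_comm]

theorem eventually_card_pos_le_and_card_neg_le (hA : A.IsHermitian) :
    ∀ᶠ B in 𝓝 A, ∀ hB : B.IsHermitian,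
      #{i | 0 < hA.eigenvalues i} ≤ #{i | 0 < hB.eigenvalues i} ∧
        #{i | hA.eigenvalues i < 0} ≤ #{i | hB.eigenvalues i < 0} := by
  have hcont : Continuous (toEuclideanCLM (𝕜 := 𝕜) (n := n)) :=
    LinearMap.continuous_of_finiteDimensional
      (toEuclideanCLM (𝕜 := 𝕜) (n := n)).toAlgEquiv.toLinearMap
  have hpos := hcont.continuousAt.eventually (eventually_card_pos_le (ι' := n)
    hA.toEuclideanCLM_eigenvectorBasis)
  have hneg := hcont.neg.continuousAt.eventually (eventually_card_pos_le (ι' := n)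
    (T := -toEuclideanCLM (n := n) (𝕜 := 𝕜) A) (b := hA.eigenvectorBasis)
    (μ := fun i => -hA.eigenvalues i) fun i => by simp [hA.toEuclideanCLM_eigenvectorBasis])
  filter_upwards [hpos, hneg] with B hBpos hBneg hB
  refine ⟨hBpos _ _ hB.toEuclideanCLM_eigenvectorBasis, ?_⟩
  simpa using hBneg hB.eigenvectorBasis (fun i => -hB.eigenvalues i)
    fun i => by simp [hB.toEuclideanCLM_eigenvectorBasis]

end Matrix.IsHermitian

theorem Matrix.IsHermitian.eventually_matrixSignature_eq {m : Type*} [Fintype m] [DecidableEq m]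
    {A : Matrix m m ℂ} (hA : A.IsHermitian) :
    ∀ᶠ B in 𝓝 A, B.IsHermitian → B.rank = A.rank → matrixSignature B = matrixSignature A := by
  filter_upwards [hA.eventually_card_pos_le_and_card_neg_le] with B hAB hB hrank
  have hsumA := hA.card_pos_add_card_neg
  have hsumB := hB.card_pos_add_card_neg
  obtain ⟨hpos, hneg⟩ := hAB hB
  rw [matrixSignature, matrixSignature, dif_pos hA, dif_pos hB]
  omega

/-- if `Q : J → Matrix(n,n,ℂ)` is a continuous family of Hermitian matrices
on an open interval `J ⊆ ℝ` whose rank is constant on `J`, then the signature of `Q(φ)`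
is constant on `J`. -/
theorem signature_constant_of_rank_constant {n : ℕ} (a b : ℝ)
    (Q : ℝ → Matrix (Fin n) (Fin n) ℂ)
    (hherm : ∀ φ ∈ Set.Ioo a b, (Q φ).IsHermitian)
    (hcont : ∀ i j, ContinuousOn (fun φ => Q φ i j) (Set.Ioo a b))
    (hrank : ∃ ρ : ℕ, ∀ φ ∈ Set.Ioo a b, (Q φ).rank = ρ) :
    ∃ s : ℤ, ∀ φ ∈ Set.Ioo a b, matrixSignature (Q φ) = s := by
  obtain ⟨ρ, hρ⟩ := hrank
  have hsign : ContinuousOn (fun φ => matrixSignature (Q φ)) (Set.Ioo a b) := by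
    intro φ hφ
    have hQ : Tendsto Q (𝓝[Set.Ioo a b] φ) (𝓝 (Q φ)) :=
      tendsto_pi_nhds.2 fun i => tendsto_pi_nhds.2 fun j => hcont i j φ hφ
    rw [ContinuousWithinAt, nhds_discrete, tendsto_pure]
    filter_upwards [hQ.eventually (hherm φ hφ).eventually_matrixSignature_eq,
      self_mem_nhdsWithin] with ψ hψ hψJ
    exact hψ (hherm ψ hψJ) ((hρ ψ hψJ).trans (hρ φ hφ).symm)
  rcases (Set.Ioo a b).eq_empty_or_nonempty with hempty | ⟨φ₀, hφ₀⟩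
  · exact ⟨0, by simp [hempty]⟩
  · exact ⟨_, fun φ hφ => isPreconnected_Ioo.constant hsign hφ hφ₀⟩
end

section
/- Define f_n(φ) = −sin((n+1)φ) + sin(nφ) + sin(φ) for a positive integer n. Then f_n(2πk/(n+1)) = 0 and f_n(2πk/n) = 0 for integers k; moreover f_n(φ) > 0 for φ ∈ (2π(k−1)/n, 2πk/(n+1)) and f_n(φ) < 0 for φ ∈ (2πk/(n+1), 2πk/n), for k = 1,…,n. -/
open Real

private lemma trig_id_aux (a c : ℝ) :
    -Real.sin (2*(a+c)) + Real.sin (2*a) + Real.sin (2*c)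
      = 4 * Real.sin (a+c) * Real.sin a * Real.sin c := by
  rw [Real.sin_two_mul, Real.sin_two_mul, Real.sin_two_mul, Real.sin_add, Real.cos_add]
  linear_combination (-2*Real.sin a*Real.cos a) * (Real.sin_sq_add_cos_sq c)
    + (-2*Real.sin c*Real.cos c) * (Real.sin_sq_add_cos_sq a)

private lemma sin_sign_aux (m : ℕ) (x : ℝ) (h1 : m * π < x) (h2 : x < (m+1) * π) :
    0 < (-1:ℝ)^m * Real.sin x := by
  have h : Real.sin (x - m*π) = (-1:ℝ)^m * Real.sin x := by
    have := Real.sin_nat_mul_pi_sub x m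
    have h' : Real.sin (x - m*π) = -Real.sin ((m:ℝ)*π - x) := by
      rw [← Real.sin_neg]; ring_nf
    rw [h', this]; ring
  rw [← h]
  apply Real.sin_pos_of_pos_of_lt_pi <;> nlinarith [Real.pi_pos]

/-- for a positive integer `n`, the function
`f_n(φ) = −sin((n+1)φ) + sin(nφ) + sin(φ)` vanishes at `φ = 2πk/(n+1)` and `φ = 2πk/n`
for integers `k`; moreover for `k = 1,…,n` it is positive on `(2π(k−1)/n, 2πk/(n+1))`
and negative on `(2πk/(n+1), 2πk/n)`. -/
theorem f_sign_pattern (n : ℕ) (hn : 0 < n)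
    (f : ℝ → ℝ)
    (hf : ∀ φ, f φ = -Real.sin ((n + 1) * φ) + Real.sin (n * φ) + Real.sin φ) :
    (∀ k : ℤ, f (2 * π * k / (n + 1)) = 0 ∧ f (2 * π * k / n) = 0) ∧
    (∀ k : ℕ, 1 ≤ k → k ≤ n →
      (∀ φ ∈ Set.Ioo (2 * π * (k - 1) / n) (2 * π * k / (n + 1)), 0 < f φ) ∧
      (∀ φ ∈ Set.Ioo (2 * π * k / (n + 1)) (2 * π * k / n), f φ < 0)) := by
  have hn' : (0:ℝ) < n := by exact_mod_cast hn
  have hn1 : (0:ℝ) < (n:ℝ) + 1 := by linarith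
  have hπ := Real.pi_pos
  have key : ∀ φ : ℝ, f φ
      = 4 * Real.sin (((n:ℝ)+1)*φ/2) * Real.sin ((n:ℝ)*φ/2) * Real.sin (φ/2) := by
    intro φ
    have h := trig_id_aux ((n:ℝ)*φ/2) (φ/2)
    rw [show (2:ℝ)*((n:ℝ)*φ/2 + φ/2) = ((n:ℝ)+1)*φ by ring,
        show (2:ℝ)*((n:ℝ)*φ/2) = (n:ℝ)*φ by ring,
        show (2:ℝ)*(φ/2) = φ by ring,
        show (n:ℝ)*φ/2 + φ/2 = ((n:ℝ)+1)*φ/2 by ring] at h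
    rw [hf]
    push_cast
    linarith [h]
  constructor
  · intro k
    constructor
    · rw [key]
      have : ((n:ℝ)+1) * (2 * π * k / ((n:ℝ)+1)) / 2 = (k:ℝ) * π := by
        field_simp
      rw [this, Real.sin_int_mul_pi]; ring
    · rw [key]
      have : (n:ℝ) * (2 * π * k / (n:ℝ)) / 2 = (k:ℝ) * π := by
        field_simp
      rw [this, Real.sin_int_mul_pi]; ring
  · intro k hk1 hkn
    obtain ⟨m, rfl⟩ : ∃ m, k = m + 1 := ⟨k - 1, (Nat.succ_pred_eq_of_pos hk1).symm⟩
    have hmn : (m:ℝ) + 1 ≤ n := by exact_mod_cast hkn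
    constructor
    · rintro φ ⟨hφ1, hφ2⟩
      push_cast at hφ1 hφ2
      -- hφ1 : 2π m / n < φ, hφ2 : φ < 2π(m+1)/(n+1)
      have H1 : 2*π*(m:ℝ) < n*φ := by
        rw [div_lt_iff₀ hn'] at hφ1; nlinarith
      have H2 : ((n:ℝ)+1)*φ < 2*π*((m:ℝ)+1) := by
        rw [lt_div_iff₀ hn1] at hφ2; nlinarith
      have hφpos : 0 < φ := by nlinarith
      have hφlt : φ < 2*π := by nlinarith
      have hs3 : 0 < Real.sin (φ/2) := by
        apply Real.sin_pos_of_pos_of_lt_pi <;> linarith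
      have hs2 : 0 < (-1:ℝ)^m * Real.sin ((n:ℝ)*φ/2) := by
        apply sin_sign_aux <;> push_cast <;> linarith
      have hs1 : 0 < (-1:ℝ)^m * Real.sin (((n:ℝ)+1)*φ/2) := by
        apply sin_sign_aux <;> push_cast <;> linarith
      have hsq : ((-1:ℝ)^m) * ((-1:ℝ)^m) = 1 := by
        rw [← pow_add]; exact Even.neg_one_pow ⟨m, rfl⟩
      rw [key]
      nlinarith [mul_pos hs1 hs2, mul_pos (mul_pos hs1 hs2) hs3]
    · rintro φ ⟨hφ1, hφ2⟩
      push_cast at hφ1 hφ2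
      -- hφ1 : 2π(m+1)/(n+1) < φ, hφ2 : φ < 2π(m+1)/n
      have H1 : 2*π*((m:ℝ)+1) < ((n:ℝ)+1)*φ := by
        rw [div_lt_iff₀ hn1] at hφ1; nlinarith
      have H2 : (n:ℝ)*φ < 2*π*((m:ℝ)+1) := by
        rw [lt_div_iff₀ hn'] at hφ2; nlinarith
      have hφpos : 0 < φ := by nlinarith
      have hφlt : φ < 2*π := by nlinarith
      have hs3 : 0 < Real.sin (φ/2) := by
        apply Real.sin_pos_of_pos_of_lt_pi <;> linarith
      have hs2 : 0 < (-1:ℝ)^m * Real.sin ((n:ℝ)*φ/2) := by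
        apply sin_sign_aux <;> push_cast <;> linarith
      have hs1 : 0 < (-1:ℝ)^(m+1) * Real.sin (((n:ℝ)+1)*φ/2) := by
        apply sin_sign_aux <;> push_cast <;> linarith
      have hsq : ((-1:ℝ)^m) * ((-1:ℝ)^m) = 1 := by
        rw [← pow_add]; exact Even.neg_one_pow ⟨m, rfl⟩
      have hpow : ((-1:ℝ)^(m+1)) = -((-1:ℝ)^m) := by ring
      rw [key]
      rw [hpow] at hs1
      nlinarith [mul_pos hs1 hs2, mul_pos (mul_pos hs1 hs2) hs3]
end

section
/- For a positive integer a, define the step function η_a : ℝ → ℤ of period 2π by η_a(φ) = a + 1 − 2k if 2π(k−1)/a < φ < 2πk/a (k = 1,…,a), η_a(φ) = a − 2k if φ = 2πk/a (k = 1,…,a−1), and η_a(0) = 0. Let f_n(φ) = −sin((n+1)φ) + sin(nφ) + sin(φ) and let sgn x = x/|x| for x ≠ 0, sgn 0 = 0. Then for every positive integer a and every φ ∈ ℝ, the sum Σ_{n=1}^{a−1} sgn(f_n(φ)) equals η_a(φ). -/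
/-!
Writing `φ = 2θ`, one has `f_n(2θ) = 4 sin θ sin nθ sin (n+1)θ`. For `φ = 2πx` with
`0 < x < 1` the factor `sin πx` is positive, so the `n`-th sign is the product of the signs of
`sin πnx` and `sin π(n+1)x`. Two points `y < z < y + 1` satisfy
`sgn sin πy · sgn sin πz = 1 - (w z - w y)` with `w y = ⌊y⌋ + ⌈y⌉`, hence the sum telescopes
to `a - ⌊ax⌋ - ⌈ax⌉`, which is `η_a(2πx)` whether or not `ax` is an integer. Both sides are
`2π`-periodic, which reduces everything to `0 ≤ x < 1`.
-/

open Real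

/-- The sign of a real number, as an integer: `x/|x|` for `x ≠ 0` and `0` for `x = 0`. -/
noncomputable def sgnR (x : ℝ) : ℤ := if 0 < x then 1 else if x < 0 then -1 else 0

open Finset Function

noncomputable def f (n : ℕ) (φ : ℝ) : ℝ := -sin ((n + 1) * φ) + sin (n * φ) + sin φ

theorem Function.Periodic.map_fract {α β : Type*} [Ring α] [LinearOrder α] [FloorRing α]
    {g : α → β} (hg : Periodic g 1) (x : α) : g (Int.fract x) = g x := by
  rw [← Int.self_sub_floor, ← mul_one (⌊x⌋ : α), hg.sub_int_mul_eq]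

theorem Int.floor_add_ceil_of_lt {R : Type*} [CommRing R] [LinearOrder R]
    [IsStrictOrderedRing R] [FloorRing R] {y : R} {m : ℤ} (h₁ : m < y) (h₂ : y < m + 1) :
    ⌊y⌋ + ⌈y⌉ = 2 * m + 1 := by
  have hceil : ⌈y⌉ = m + 1 := Int.ceil_eq_iff.2 ⟨by push_cast; linarith, by push_cast; linarith⟩
  rw [Int.floor_eq_iff.2 ⟨h₁.le, h₂⟩, hceil]
  ring

lemma sgnR_eq_sign (x : ℝ) : sgnR x = (SignType.sign x : ℤ) := by
  rcases lt_trichotomy x 0 with h | rfl | h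
  · simp [sgnR, h, h.not_gt]
  · simp [sgnR]
  · simp [sgnR, h]

lemma sgnR_mul (x y : ℝ) : sgnR (x * y) = sgnR x * sgnR y := by
  simp only [sgnR_eq_sign, sign_mul, SignType.coe_mul]

lemma sgnR_of_pos {x : ℝ} (hx : 0 < x) : sgnR x = 1 := by simp [sgnR, hx]

lemma sgnR_of_neg {x : ℝ} (hx : x < 0) : sgnR x = -1 := by simp [sgnR, hx, hx.not_gt]

lemma f_two_mul (n : ℕ) (θ : ℝ) :
    f n (2 * θ) = 4 * sin θ * sin (n * θ) * sin ((n + 1) * θ) := by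
  have h₁ : ((n : ℝ) + 1) * (2 * θ) = 2 * (n * θ) + 2 * θ := by ring
  have h₂ : (n : ℝ) * (2 * θ) = 2 * (n * θ) := by ring
  have h₃ : ((n : ℝ) + 1) * θ = n * θ + θ := by ring
  rw [f, h₁, h₂, h₃]
  generalize (n : ℝ) * θ = A
  simp only [sin_add, sin_two_mul, cos_two_mul]
  linear_combination (-4 * sin θ * cos θ) * sin_sq_add_cos_sq A
    + (-4 * sin A * cos A) * sin_sq_add_cos_sq θ

lemma f_periodic (n : ℕ) : Periodic (f n) (2 * π) := by
  intro φ
  have h : ((n : ℝ) + 1) * (φ + 2 * π) = (n + 1) * φ + (n + 1 : ℕ) * (2 * π) := by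
    push_cast; ring
  rw [f, f, h, mul_add, sin_add_nat_mul_two_pi, sin_add_nat_mul_two_pi, sin_add_two_pi]

lemma sgnR_sin_pi_mul_of_pos_of_lt_two {z : ℝ} (h₀ : 0 < z) (h₂ : z < 2) :
    sgnR (sin (π * z)) = 2 - (⌊z⌋ + ⌈z⌉) := by
  rcases lt_trichotomy z 1 with h₁ | rfl | h₁
  · rw [sgnR_of_pos (sin_pos_of_pos_of_lt_pi (by positivity) (by nlinarith [pi_pos])),
      Int.floor_add_ceil_of_lt (m := 0) (by simpa using h₀) (by simpa using h₁)]
    ring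
  · simp [sgnR]
  · have hsin : sin (π * z) < 0 := by
      rw [← sin_sub_two_pi]
      exact sin_neg_of_neg_of_neg_pi_lt (by nlinarith [pi_pos]) (by nlinarith [pi_pos])
    rw [sgnR_of_neg hsin,
      Int.floor_add_ceil_of_lt (m := 1) (by simpa using h₁) (by norm_num; linarith)]
    ring

lemma sgnR_sin_pi_mul_add_int_mul (y z : ℝ) (m : ℤ) :
    sgnR (sin (π * (y + m))) * sgnR (sin (π * (z + m))) =
      sgnR (sin (π * y)) * sgnR (sin (π * z)) := by
  simp only [← sgnR_mul, mul_add, mul_comm π (m : ℝ), sin_add_int_mul_pi]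
  congr 1
  rw [mul_mul_mul_comm, ← mul_zpow, neg_one_mul, neg_neg, one_zpow, one_mul]

lemma sgnR_sin_pi_mul_mul_sgnR_sin_pi_mul {y z : ℝ} (h₁ : y < z) (h₂ : z < y + 1) :
    sgnR (sin (π * y)) * sgnR (sin (π * z)) = 1 - ((⌊z⌋ + ⌈z⌉) - (⌊y⌋ + ⌈y⌉)) := by
  obtain ⟨m, y, z, rfl, rfl, hy₀, hy₁⟩ :
      ∃ (m : ℤ) (y' z' : ℝ), y = y' + m ∧ z = z' + m ∧ 0 ≤ y' ∧ y' < 1 :=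
    ⟨⌊y⌋, Int.fract y, z - ⌊y⌋, (Int.fract_add_floor y).symm, by ring, Int.fract_nonneg y,
      Int.fract_lt_one y⟩
  have h₁ : y < z := by linarith
  have h₂ : z < y + 1 := by linarith
  rw [sgnR_sin_pi_mul_add_int_mul, Int.floor_add_intCast, Int.ceil_add_intCast,
    Int.floor_add_intCast, Int.ceil_add_intCast,
    show ⌊z⌋ + m + (⌈z⌉ + m) - (⌊y⌋ + m + (⌈y⌉ + m)) = ⌊z⌋ + ⌈z⌉ - (⌊y⌋ + ⌈y⌉) by ring]
  rcases hy₀.eq_or_lt with rfl | hy₀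
  · rw [Int.floor_add_ceil_of_lt (m := 0) (by simpa using h₁) (by simpa using h₂)]
    simp [sgnR]
  · rw [sgnR_sin_pi_mul_of_pos_of_lt_two hy₀ (by linarith),
      sgnR_sin_pi_mul_of_pos_of_lt_two (by linarith) (by linarith),
      Int.floor_add_ceil_of_lt (m := 0) (by simpa using hy₀) (by simpa using hy₁)]
    ring

lemma sum_sgnR_f_two_pi_mul {a : ℕ} (ha : 0 < a) {x : ℝ} (hx₀ : 0 < x) (hx₁ : x < 1) :
    ∑ n ∈ Icc 1 (a - 1), sgnR (f n (2 * π * x)) = a - (⌊a * x⌋ + ⌈a * x⌉) := by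
  set g : ℕ → ℤ := fun n => n - (⌊n * x⌋ + ⌈n * x⌉)
  have hterm : ∀ n : ℕ, sgnR (f n (2 * π * x)) = g (n + 1) - g n := by
    intro n
    have hnx : (n : ℝ) * (π * x) = π * (n * x) := by ring
    have hnx' : ((n : ℝ) + 1) * (π * x) = π * ((n + 1 : ℕ) * x) := by push_cast; ring
    rw [mul_assoc, f_two_mul, sgnR_mul, sgnR_mul, sgnR_mul,
      sgnR_of_pos (by positivity : (0 : ℝ) < 4),
      sgnR_of_pos (sin_pos_of_pos_of_lt_pi (by positivity) (by nlinarith [pi_pos])), hnx, hnx',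
      mul_assoc, sgnR_sin_pi_mul_mul_sgnR_sin_pi_mul]
    · simp only [g]; push_cast; ring
    · push_cast; nlinarith
    · push_cast; nlinarith
  rw [sum_congr rfl fun n _ => hterm n, ← Ico_add_one_right_eq_Icc, show a - 1 + 1 = a by omega,
    sum_Ico_sub g ha]
  simp only [g, Nat.cast_one, one_mul,
    Int.floor_add_ceil_of_lt (m := 0) (by simpa using hx₀) (by simpa using hx₁)]
  ring

lemma periodic_sum_sgnR_f (a : ℕ) :
    Periodic (fun x => ∑ n ∈ Icc 1 (a - 1), sgnR (f n (2 * π * x))) 1 := by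
  intro x
  simp only [mul_add, mul_one]
  exact sum_congr rfl fun n _ => congrArg sgnR (f_periodic n _)

lemma eta_two_pi_mul {a : ℕ} (ha : 0 < a) {η : ℝ → ℤ}
    (hη₁ : ∀ k : ℕ, 1 ≤ k → k ≤ a → ∀ φ : ℝ,
      2 * π * (k - 1) / a < φ → φ < 2 * π * k / a → η φ = a + 1 - 2 * k)
    (hη₂ : ∀ k : ℕ, 1 ≤ k → k ≤ a - 1 → η (2 * π * k / a) = a - 2 * k)
    {x : ℝ} (hx₀ : 0 < x) (hx₁ : x < 1) :
    η (2 * π * x) = a - (⌊a * x⌋ + ⌈a * x⌉) := by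
  have ha' : (0 : ℝ) < a := by exact_mod_cast ha
  set K := ⌊(a : ℝ) * x⌋₊
  have hK : (K : ℝ) ≤ a * x := Nat.floor_le (by positivity)
  have hK' : a * x < K + 1 := Nat.lt_floor_add_one _
  have hKa : K < a := Nat.floor_lt (by positivity) |>.2 (by nlinarith)
  rcases hK.eq_or_lt with hKx | hlt
  · have hK₁ : 1 ≤ K := by
      by_contra! h
      have : (K : ℝ) = 0 := by exact_mod_cast Nat.lt_one_iff.1 h
      nlinarith
    rw [show 2 * π * x = 2 * π * K / a by rw [hKx]; field_simp, hη₂ K hK₁ (by omega), ← hKx,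
      Int.floor_natCast, Int.ceil_natCast]
    ring
  · rw [hη₁ (K + 1) (by omega) (by omega) _ ?lower ?upper,
      Int.floor_add_ceil_of_lt (m := K) (by exact_mod_cast hlt) (by exact_mod_cast hK')]
    · push_cast; ring
    case lower => rw [div_lt_iff₀ ha']; push_cast; nlinarith [pi_pos]
    case upper => rw [lt_div_iff₀ ha']; push_cast; nlinarith [pi_pos]

/-- let `η_a : ℝ → ℤ` be the `2π`-periodic step function with
`η_a(φ) = a + 1 − 2k` for `2π(k−1)/a < φ < 2πk/a` (`k = 1,…,a`), `η_a(φ) = a − 2k`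
at `φ = 2πk/a` (`k = 1,…,a−1`) and `η_a(0) = 0`. Then for every positive integer `a`
and every real `φ`, `Σ_{n=1}^{a−1} sgn(f_n(φ)) = η_a(φ)` where
`f_n(φ) = −sin((n+1)φ) + sin(nφ) + sin(φ)`. -/
theorem sum_sgn_f_eq_eta (a : ℕ) (ha : 0 < a) (η : ℝ → ℤ)
    (hη₁ : ∀ k : ℕ, 1 ≤ k → k ≤ a → ∀ φ : ℝ,
      2 * π * (k - 1) / a < φ → φ < 2 * π * k / a → η φ = a + 1 - 2 * k)
    (hη₂ : ∀ k : ℕ, 1 ≤ k → k ≤ a - 1 → η (2 * π * k / a) = a - 2 * k)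
    (hη₃ : η 0 = 0)
    (hper : ∀ φ : ℝ, η (φ + 2 * π) = η φ) :
    ∀ φ : ℝ, (∑ n ∈ Finset.Icc 1 (a - 1),
      sgnR (-Real.sin ((n + 1) * φ) + Real.sin (n * φ) + Real.sin φ)) = η φ := by
  intro φ
  obtain ⟨x, rfl⟩ : ∃ x, φ = 2 * π * x := ⟨φ / (2 * π), by field_simp⟩
  have hη : Periodic (fun x => η (2 * π * x)) 1 := fun x => by
    simp only [mul_add, mul_one, hper]
  change ∑ n ∈ Icc 1 (a - 1), sgnR (f n (2 * π * x)) = η (2 * π * x)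
  rw [← (periodic_sum_sgnR_f a).map_fract, ← hη.map_fract]
  rcases (Int.fract_nonneg x).eq_or_lt with h₀ | h₀
  · simp [← h₀, f, sgnR, hη₃]
  · rw [sum_sgnR_f_two_pi_mul ha h₀ (Int.fract_lt_one x),
      eta_two_pi_mul ha hη₁ hη₂ h₀ (Int.fract_lt_one x)]
end

section
/- Let w be a complex number with |w| = 1, w ≠ 1, and let u, n be positive integers with u ≥ n ≥ 1 such that w^k ≠ 1 for all k = 1,…,u. Then sgn(Re(i(w^{n+1}−1)/((w−1)(w^n−1)))) = sgn(f_n(φ)) where w = e^{iφ} and f_n(φ) = −sin((n+1)φ) + sin(nφ) + sin(φ). In particular, i(w^{n+1}−1)/((w−1)(w^n−1)) is real. -/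
open Real

/-!
Multiplying numerator and denominator by the conjugate of `D = (w - 1)(w^n - 1)` and using
`conj w = w⁻¹`, the numerator expands to `i[(w^{n+1} - w̄^{n+1}) - (w^n - w̄^n) - (w - w̄)]`, which is
`2 f_n(φ)` since `w^k - w̄^k = 2i sin(kφ)`. So the quotient is the real number `2 f_n(φ) / |D|²`.
If `D = 0`, the same identity gives `f_n(φ) = 0`, and with `x / 0 = 0` both signs are `0`.
-/

open ComplexConjugate

lemma sgnR_mul_of_pos {c : ℝ} (hc : 0 < c) (x : ℝ) : sgnR (c * x) = sgnR x := by
  have hneg : c * x < 0 ↔ x < 0 := smul_neg_iff_of_pos_left hc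
  simp only [sgnR, mul_pos_iff_of_pos_left hc, hneg]

lemma pow_succ_sub_one_mul_sub_one_mul_pow_sub_one {R : Type*} [CommRing R] {w v : R}
    (hwv : w * v = 1) (n : ℕ) :
    (w ^ (n + 1) - 1) * ((v - 1) * (v ^ n - 1)) =
      (w ^ (n + 1) - v ^ (n + 1)) - (w ^ n - v ^ n) - (w - v) := by
  have hpow : w ^ n * v ^ n = 1 := by rw [← mul_pow, hwv, one_pow]
  linear_combination (1 - w ^ n) * hwv + (w * v - w) * hpow

namespace Complex

lemma exp_ofReal_mul_I_mul_conj (φ : ℝ) : exp (φ * I) * conj (exp (φ * I)) = 1 := by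
  rw [mul_conj, normSq_eq_norm_sq, norm_exp_ofReal_mul_I, one_pow, ofReal_one]

lemma exp_ofReal_mul_I_pow_sub_conj_pow (φ : ℝ) (k : ℕ) :
    exp (φ * I) ^ k - conj (exp (φ * I)) ^ k = (2 * Real.sin (k * φ) : ℝ) * I := by
  rw [← map_pow, sub_conj, ← exp_nat_mul, ← mul_assoc, ← ofReal_natCast, ← ofReal_mul,
    exp_ofReal_mul_I_im]

lemma div_eq_ofReal_div_normSq {z D : ℂ} {r : ℝ} (h : z * conj D = r) :
    z / D = ((r / normSq D : ℝ) : ℂ) := by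
  rw [div_eq_mul_inv, inv_def, ← mul_assoc, h, div_eq_mul_inv, ofReal_mul]

lemma I_mul_pow_succ_sub_one_mul_conj_eq {w : ℂ} {φ : ℝ} (hw : w = exp (φ * I)) (n : ℕ) :
    I * (w ^ (n + 1) - 1) * conj ((w - 1) * (w ^ n - 1)) =
      ((2 * (-Real.sin ((n + 1) * φ) + Real.sin (n * φ) + Real.sin φ) : ℝ) : ℂ) := by
  subst hw
  have hsin := exp_ofReal_mul_I_pow_sub_conj_pow φ
  simp only [map_mul, map_sub, map_pow, map_one]
  rw [mul_assoc, pow_succ_sub_one_mul_sub_one_mul_pow_sub_one (exp_ofReal_mul_I_mul_conj φ) n,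
    hsin, hsin, sub_conj, exp_ofReal_mul_I_im]
  simp only [Nat.cast_succ, ofReal_mul, ofReal_add, ofReal_neg, ofReal_ofNat]
  linear_combination (2 * (Real.sin ((n + 1) * φ) - Real.sin (n * φ) - Real.sin φ) : ℂ) * I_sq

end Complex

theorem sgn_quotient_eq_sgn_f_general (w : ℂ) (φ : ℝ) (hw : w = Complex.exp (φ * Complex.I))
    (n : ℕ) :
    (Complex.I * (w ^ (n + 1) - 1) / ((w - 1) * (w ^ n - 1))).im = 0 ∧
    sgnR (Complex.I * (w ^ (n + 1) - 1) / ((w - 1) * (w ^ n - 1))).re =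
      sgnR (-Real.sin ((n + 1) * φ) + Real.sin (n * φ) + Real.sin φ) := by
  set D := (w - 1) * (w ^ n - 1)
  set f := -Real.sin ((n + 1) * φ) + Real.sin (n * φ) + Real.sin φ
  have hkey : Complex.I * (w ^ (n + 1) - 1) * conj D = ((2 * f : ℝ) : ℂ) :=
    Complex.I_mul_pow_succ_sub_one_mul_conj_eq hw n
  rw [Complex.div_eq_ofReal_div_normSq hkey, Complex.ofReal_im, Complex.ofReal_re]
  refine ⟨rfl, ?_⟩
  rcases eq_or_ne D 0 with hD | hD
  · have hf : f = 0 := by simpa [hD] using hkey.symm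
    simp [hD, hf]
  · rw [mul_div_right_comm]
    exact sgnR_mul_of_pos (div_pos two_pos (Complex.normSq_pos.2 hD)) f

/-- for `w = e^{iφ}` on the unit circle with `w ≠ 1`, `u ≥ n ≥ 1` and
`w^k ≠ 1` for `k = 1,…,u`, the quantity `i(w^{n+1}−1)/((w−1)(w^n−1))` is real and its
sign equals the sign of `f_n(φ) = −sin((n+1)φ) + sin(nφ) + sin(φ)`. -/
theorem sgn_quotient_eq_sgn_f (w : ℂ) (φ : ℝ) (hw : w = Complex.exp (φ * Complex.I))
    (habs : ‖w‖ = 1) (hw1 : w ≠ 1)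
    (u n : ℕ) (hn : 1 ≤ n) (hun : n ≤ u)
    (hroots : ∀ k : ℕ, 1 ≤ k → k ≤ u → w ^ k ≠ 1) :
    (Complex.I * (w ^ (n + 1) - 1) / ((w - 1) * (w ^ n - 1))).im = 0 ∧
    sgnR (Complex.I * (w ^ (n + 1) - 1) / ((w - 1) * (w ^ n - 1))).re =
      sgnR (-Real.sin ((n + 1) * φ) + Real.sin (n * φ) + Real.sin φ) :=
  sgn_quotient_eq_sgn_f_general w φ hw n
end

section
/- Let A be a square rational matrix, ε = ±1, and suppose w is a complex number with |w| = 1, w ≠ 1, and k an integer with w^k ≠ 1 and w^{k+1} ≠ 1. Then the Hermitian 2n×2n matrix [[ (w^k A − ε Aᵀ)/(w^k − 1), A ], [ ε Aᵀ, (w A − ε Aᵀ)/(w − 1) ]] (made Hermitian by multiplying by i if ε = 1 as appropriate) is congruent over ℂ to the block sum of ( (w^{k+1}−1)(A − ε Aᵀ) ) / ( (w−1)(w^k−1) ) and (w^{k+1} A − ε Aᵀ)/(w^{k+1} − 1). -/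
/-!
Write `u = w ^ k` and `B = ε Aᵀ`. Subtracting the second block row and column from the first
gives `[[c (A - B), -(A - B)/(w - 1)], [-w (A - B)/(w - 1), (w A - B)/(w - 1)]]` with
`c = (u w - 1)/((u - 1)(w - 1))`. Adding `t = w (u - 1)/(u w - 1)` times the first block row to
the second clears the lower left block; because `|u| = |w| = 1`, the matching column operation
multiplies by `conj t = (u - 1)/(u w - 1)`, which clears the upper right block as well, and what
remains in the lower right corner is `(u w A - B)/(u w - 1)`.
-/

/-- Two square complex matrices are congruent if `Q = M * P * Mᴴ` for some invertible `M`. -/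
def MatCongruent {m : Type*} [Fintype m] [DecidableEq m]
    (P Q : Matrix m m ℂ) : Prop :=
  ∃ M : Matrix m m ℂ, IsUnit M.det ∧ Q = M * P * M.conjTranspose

open Matrix

theorem star_mul_sub_one_div_of_norm_eq_one {u w : ℂ} (hu : ‖u‖ = 1) (hw : ‖w‖ = 1)
    (huw : u * w ≠ 1) :
    star (w * (u - 1) / (u * w - 1)) = (u - 1) / (u * w - 1) := by
  have hu0 : u ≠ 0 := norm_ne_zero_iff.mp (by simp [hu])
  have hw0 : w ≠ 0 := norm_ne_zero_iff.mp (by simp [hw])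
  have hden : u⁻¹ * w⁻¹ - 1 ≠ 0 := by
    rwa [sub_ne_zero, ← mul_inv, Ne, inv_eq_one]
  rw [Complex.star_def, map_div₀, map_mul, map_sub, map_sub, map_mul, map_one,
    ← Complex.inv_eq_conj hu, ← Complex.inv_eq_conj hw,
    eq_div_iff (sub_ne_zero.mpr huw), div_mul_eq_mul_div, div_eq_iff hden]
  field_simp
  ring

section Congruence

variable {m : Type*} [Fintype m] [DecidableEq m]

theorem MatCongruent.trans {P Q R : Matrix m m ℂ} (hPQ : MatCongruent P Q)
    (hQR : MatCongruent Q R) : MatCongruent P R := by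
  obtain ⟨M, hM, rfl⟩ := hPQ
  obtain ⟨N, hN, rfl⟩ := hQR
  refine ⟨N * M, by simpa [det_mul] using hN.mul hM, ?_⟩
  simp only [conjTranspose_mul, Matrix.mul_assoc]

theorem matCongruent_mul_mul_conjTranspose {M : Matrix m m ℂ} (hM : IsUnit M.det)
    (P : Matrix m m ℂ) : MatCongruent P (M * P * Mᴴ) :=
  ⟨M, hM, rfl⟩

theorem matCongruent_fromBlocks_transvection_upper (t : ℂ) (P₁₁ P₁₂ P₂₁ P₂₂ : Matrix m m ℂ) :
    MatCongruent (fromBlocks P₁₁ P₁₂ P₂₁ P₂₂)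
      (fromBlocks (P₁₁ + t • P₂₁ + star t • (P₁₂ + t • P₂₂)) (P₁₂ + t • P₂₂)
        (P₂₁ + star t • P₂₂) P₂₂) := by
  convert matCongruent_mul_mul_conjTranspose (M := fromBlocks 1 (t • 1) 0 1) (by simp)
    (fromBlocks P₁₁ P₁₂ P₂₁ P₂₂) using 1
  simp only [fromBlocks_conjTranspose, conjTranspose_one, conjTranspose_zero,
    conjTranspose_smul, fromBlocks_multiply, Matrix.one_mul, Matrix.mul_one, Matrix.zero_mul,
    Matrix.mul_zero, Matrix.smul_mul, Matrix.mul_smul, zero_add]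

theorem matCongruent_fromBlocks_transvection_lower (t : ℂ) (P₁₁ P₁₂ P₂₁ P₂₂ : Matrix m m ℂ) :
    MatCongruent (fromBlocks P₁₁ P₁₂ P₂₁ P₂₂)
      (fromBlocks P₁₁ (P₁₂ + star t • P₁₁) (P₂₁ + t • P₁₁)
        (P₂₂ + t • P₁₂ + star t • (P₂₁ + t • P₁₁))) := by
  convert matCongruent_mul_mul_conjTranspose (M := fromBlocks 1 0 (t • 1) 1) (by simp)
    (fromBlocks P₁₁ P₁₂ P₂₁ P₂₂) using 1
  simp only [fromBlocks_conjTranspose, conjTranspose_one, conjTranspose_zero,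
    conjTranspose_smul, fromBlocks_multiply, Matrix.one_mul, Matrix.mul_one, Matrix.zero_mul,
    Matrix.mul_zero, Matrix.smul_mul, Matrix.mul_smul, add_zero]
  rw [fromBlocks_inj]
  refine ⟨rfl, by module, by module, by module⟩

theorem matCongruent_fromBlocks_of_norm_eq_one (A B : Matrix m m ℂ) {u w : ℂ} (hu : ‖u‖ = 1)
    (hw : ‖w‖ = 1) (hu1 : u ≠ 1) (hw1 : w ≠ 1) (huw : u * w ≠ 1) :
    MatCongruent (fromBlocks ((u - 1)⁻¹ • (u • A - B)) A B ((w - 1)⁻¹ • (w • A - B)))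
      (fromBlocks (((u * w - 1) / ((w - 1) * (u - 1))) • (A - B)) 0 0
        ((u * w - 1)⁻¹ • ((u * w) • A - B))) := by
  have hu' : u - 1 ≠ 0 := sub_ne_zero.mpr hu1
  have hw' : w - 1 ≠ 0 := sub_ne_zero.mpr hw1
  have hwu : w * u - 1 ≠ 0 := sub_ne_zero.mpr (mul_comm u w ▸ huw)
  convert (matCongruent_fromBlocks_transvection_upper (-1) _ A B _).trans
    (matCongruent_fromBlocks_transvection_lower (w * (u - 1) / (u * w - 1)) _ _ _ _) using 1
  simp only [star_mul_sub_one_div_of_norm_eq_one hu hw huw, star_neg, star_one, fromBlocks_inj]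
  refine ⟨?_, ?_, ?_, ?_⟩ <;> match_scalars <;> field_simp <;> ring

end Congruence

theorem block_congruence_general {n : ℕ} (A : Matrix (Fin n) (Fin n) ℚ) (ε : ℂ)
    (w : ℂ) (habs : ‖w‖ = 1) (hw1 : w ≠ 1)
    (k : ℤ) (hk : w ^ k ≠ 1) (hk1 : w ^ (k + 1) ≠ 1) :
    MatCongruent
      (Matrix.fromBlocks
        ((w ^ k - 1)⁻¹ • (w ^ k • (A.map fun q => (q : ℂ)) -
          ε • (A.map fun q => (q : ℂ)).transpose))
        (A.map fun q => (q : ℂ))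
        (ε • (A.map fun q => (q : ℂ)).transpose)
        ((w - 1)⁻¹ • (w • (A.map fun q => (q : ℂ)) -
          ε • (A.map fun q => (q : ℂ)).transpose)))
      (Matrix.fromBlocks
        (((w ^ (k + 1) - 1) / ((w - 1) * (w ^ k - 1))) •
          ((A.map fun q => (q : ℂ)) - ε • (A.map fun q => (q : ℂ)).transpose))
        0 0
        ((w ^ (k + 1) - 1)⁻¹ • (w ^ (k + 1) • (A.map fun q => (q : ℂ)) -
          ε • (A.map fun q => (q : ℂ)).transpose))) := by
  have hw0 : w ≠ 0 := norm_ne_zero_iff.mp (by simp [habs])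
  rw [zpow_add_one₀ hw0] at hk1 ⊢
  exact matCongruent_fromBlocks_of_norm_eq_one _ _ (by simp [habs]) habs hk
    hw1 hk1

/-- for a rational square matrix `A`, `ε = ±1`, `w` on the unit circle with
`w ≠ 1`, and an integer `k` with `w^k ≠ 1` and `w^{k+1} ≠ 1`, the block matrix
`[[ (w^k A − ε Aᵀ)/(w^k − 1), A ], [ ε Aᵀ, (w A − ε Aᵀ)/(w − 1) ]]` is congruent over `ℂ`
to the block sum of `((w^{k+1}−1)(A − ε Aᵀ))/((w−1)(w^k−1))` and
`(w^{k+1} A − ε Aᵀ)/(w^{k+1} − 1)`. -/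
theorem block_congruence {n : ℕ} (A : Matrix (Fin n) (Fin n) ℚ) (ε : ℂ)
    (hε : ε = 1 ∨ ε = -1) (w : ℂ) (habs : ‖w‖ = 1) (hw1 : w ≠ 1)
    (k : ℤ) (hk : w ^ k ≠ 1) (hk1 : w ^ (k + 1) ≠ 1) :
    MatCongruent
      (Matrix.fromBlocks
        ((w ^ k - 1)⁻¹ • (w ^ k • (A.map fun q => (q : ℂ)) -
          ε • (A.map fun q => (q : ℂ)).transpose))
        (A.map fun q => (q : ℂ))
        (ε • (A.map fun q => (q : ℂ)).transpose)
        ((w - 1)⁻¹ • (w • (A.map fun q => (q : ℂ)) -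
          ε • (A.map fun q => (q : ℂ)).transpose)))
      (Matrix.fromBlocks
        (((w ^ (k + 1) - 1) / ((w - 1) * (w ^ k - 1))) •
          ((A.map fun q => (q : ℂ)) - ε • (A.map fun q => (q : ℂ)).transpose))
        0 0
        ((w ^ (k + 1) - 1)⁻¹ • (w ^ (k + 1) • (A.map fun q => (q : ℂ)) -
          ε • (A.map fun q => (q : ℂ)).transpose))) :=
  block_congruence_general A ε w habs hw1 k hk hk1
end

section
/- Every symmetric square matrix A over ℚ can be written as A = Bᵀ V⁻¹ B where B is an m×n integer matrix and V is a symmetric nonsingular m×m integer matrix (for some m). -/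
/-!
Clear denominators: `d • A = M` with `d ≠ 0` and `M` an integer matrix, symmetric with `A`.
The integer matrix `V = [[0, d], [d, -d M]]` is symmetric with inverse `[[A, d⁻¹], [d⁻¹, 0]]`,
so `B = [1; 0]` cuts `A` out of `V⁻¹` as `Bᵀ V⁻¹ B`.
-/

open Matrix

namespace Matrix

lemma exists_map_intCast_eq_smul {ι κ : Type*} [Finite ι] [Finite κ] (A : Matrix ι κ ℚ) :
    ∃ d : ℤ, d ≠ 0 ∧ ∃ M : Matrix ι κ ℤ, M.map (↑) = (d : ℚ) • A := by
  obtain ⟨⟨d, hd⟩, hint⟩ :=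
    IsLocalization.exist_integer_multiples_of_finite (nonZeroDivisors ℤ) fun p : ι × κ ↦ A p.1 p.2
  choose M hM using hint
  refine ⟨d, nonZeroDivisors.ne_zero hd, of fun i j ↦ M (i, j), ?_⟩
  ext i j
  simpa using hM (i, j)

lemma map_intCast_zsmul {ι κ R : Type*} [Ring R] (d : ℤ) (M : Matrix ι κ ℤ) :
    (d • M).map (Int.cast : ℤ → R) = (d : R) • M.map Int.cast := by
  ext
  simp only [map_apply, Matrix.smul_apply, smul_eq_mul, Int.cast_mul]

variable {ι κ : Type*} [Fintype ι] [DecidableEq ι]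

lemma transpose_fromRows_one_zero_mul_mul_fromRows_one_zero [Fintype κ] {R : Type*} [Semiring R]
    (M : Matrix (ι ⊕ κ) (ι ⊕ κ) R) :
    (fromRows 1 0 : Matrix (ι ⊕ κ) ι R)ᵀ * M * (fromRows 1 0 : Matrix (ι ⊕ κ) ι R) =
      M.toBlocks₁₁ := by
  rw [← fromBlocks_toBlocks M, transpose_fromRows, fromCols_mul_fromBlocks, fromCols_mul_fromRows]
  simp

lemma transpose_reindex_mul_inv_mul_reindex [Fintype κ] [DecidableEq κ] {R m : Type*}
    [CommRing R] (e : ι ≃ κ) (B : Matrix ι m R) (V : Matrix ι ι R) :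
    (reindex e (.refl m) B)ᵀ * (reindex e e V)⁻¹ * reindex e (.refl m) B = Bᵀ * V⁻¹ * B := by
  simp

variable {K : Type*} [Field K] {c : K}

lemma fromBlocks_mul_fromBlocks_eq_one (hc : c ≠ 0) (A : Matrix ι ι K) :
    fromBlocks 0 (c • 1) (c • 1) (-(c ^ 2) • A) * fromBlocks A (c⁻¹ • 1) (c⁻¹ • 1) 0 = 1 := by
  rw [fromBlocks_multiply, ← fromBlocks_one]
  congr 1 <;> simp [smul_smul, hc, sq]

lemma toBlocks₁₁_inv_fromBlocks (hc : c ≠ 0) (A : Matrix ι ι K) :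
    (fromBlocks 0 (c • 1) (c • 1) (-(c ^ 2) • A))⁻¹.toBlocks₁₁ = A := by
  rw [inv_eq_right_inv (fromBlocks_mul_fromBlocks_eq_one hc A), toBlocks_fromBlocks₁₁]

lemma exists_int_factorization_of_isSymm {A : Matrix ι ι ℚ} (hA : A.IsSymm) :
    ∃ (B : Matrix (ι ⊕ ι) ι ℤ) (V : Matrix (ι ⊕ ι) (ι ⊕ ι) ℤ), V.IsSymm ∧ V.det ≠ 0 ∧
      A = (B.map fun z => (z : ℚ))ᵀ * (V.map fun z => (z : ℚ))⁻¹ * (B.map fun z => (z : ℚ)) := by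
  obtain ⟨d, hd, M, hM⟩ := exists_map_intCast_eq_smul A
  have hMsymm : M.IsSymm := map_injective Int.cast_injective <| by
    change Mᵀ.map _ = M.map _
    rw [transpose_map, hM, transpose_smul, hA.eq]
  have hd' : (d : ℚ) ≠ 0 := Int.cast_ne_zero.mpr hd
  have hV : (fromBlocks 0 (d • 1) (d • 1) (-(d • M)) : Matrix (ι ⊕ ι) (ι ⊕ ι) ℤ).map
      (Int.cast : ℤ → ℚ) = fromBlocks 0 ((d : ℚ) • 1) ((d : ℚ) • 1) (-((d : ℚ) ^ 2) • A) := by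
    rw [fromBlocks_map, map_intCast_zsmul, Matrix.map_neg _ Int.cast_neg, map_intCast_zsmul, hM,
      Matrix.map_one _ Int.cast_zero Int.cast_one, Matrix.map_zero _ Int.cast_zero, smul_smul,
      ← sq, neg_smul]
  refine ⟨fromRows 1 0, fromBlocks 0 (d • 1) (d • 1) (-(d • M)),
    .fromBlocks (by simp) (by simp) (hMsymm.smul d).neg, ?_, ?_⟩
  · rw [← Int.cast_ne_zero (α := ℚ), Int.cast_det, hV]
    exact (isUnit_det_of_right_inverse (fromBlocks_mul_fromBlocks_eq_one hd' A)).ne_zero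
  · rw [hV, fromRows_map, Matrix.map_one _ Int.cast_zero Int.cast_one,
      Matrix.map_zero _ Int.cast_zero, transpose_fromRows_one_zero_mul_mul_fromRows_one_zero,
      toBlocks₁₁_inv_fromBlocks hd']

end Matrix

/-- every symmetric square matrix `A` over `ℚ` can be written as
`A = Bᵀ V⁻¹ B` with `B` an `m×n` integer matrix and `V` a symmetric nonsingular `m×m`
integer matrix, for some `m`. -/
theorem symmetric_rational_matrix_factorization {n : ℕ}
    (A : Matrix (Fin n) (Fin n) ℚ) (hA : A.IsSymm) :
    ∃ (m : ℕ) (B : Matrix (Fin m) (Fin n) ℤ) (V : Matrix (Fin m) (Fin m) ℤ),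
      V.IsSymm ∧ V.det ≠ 0 ∧
      A = (B.map fun z => (z : ℚ)).transpose * (V.map fun z => (z : ℚ))⁻¹ *
        (B.map fun z => (z : ℚ)) := by
  obtain ⟨B, V, hV, hdet, hfac⟩ := exists_int_factorization_of_isSymm hA
  refine ⟨n + n, reindex finSumFinEquiv (.refl _) B, reindex finSumFinEquiv finSumFinEquiv V,
    hV.reindex _, by rwa [det_reindex_self], ?_⟩
  rw [hfac]
  exact (transpose_reindex_mul_inv_mul_reindex finSumFinEquiv _ _).symm
end

section
/- Let p_j > 7 be a prime and let (p_i)_{i∈I} be a family of distinct primes all greater than 7 with j ∈ I. Fix integers (a_i) with finitely many nonzero and a_j ≠ 0. Suppose δ₀ : ℝ → ℤ is a function with δ₀(θ) ≠ 0 if and only if θ = nπ(k ± 1/6) for some integers k and fixed n ∈ {1,2}. Define δ(θ) = Σ_i a_i δ₀(θ · p_i / 7). Then in the sum δ(7nπ/(6p_j)) = Σ_i a_i δ₀(nπ p_i/(6 p_j)) the only nonzero summand is the one with i = j, so δ(7nπ/(6p_j)) ≠ 0. Moreover every summand of δ(7nπ/(6p_j) + 2π) = Σ_i a_i δ₀(nπ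 p_i/(6p_j) + 2π p_i/7) is zero. -/
open Real

/-- let `(p_i)` be a family of distinct primes `> 7`, `j` an index,
`(a_i)` integers with finitely many nonzero and `a_j ≠ 0`, and `δ₀ : ℝ → ℤ` a function
nonzero exactly at the points `θ = nπ(k ± 1/6)`, `k ∈ ℤ`, where `n ∈ {1,2}` is fixed.
Set `δ(θ) = Σ_i a_i δ₀(θ·p_i/7)`.  Then in the sum `δ(7nπ/(6p_j))` the only possibly
nonzero summand is the one with `i = j`, and `δ(7nπ/(6p_j)) ≠ 0`, while every summand of
`δ(7nπ/(6p_j) + 2π)` vanishes, so `δ(7nπ/(6p_j) + 2π) = 0`. -/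
theorem independence_arithmetic {I : Type*} (p : I → ℕ)
    (hprime : ∀ i, Nat.Prime (p i)) (hbig : ∀ i, 7 < p i)
    (hinj : Function.Injective p)
    (j : I) (a : I → ℤ) (hfin : {i | a i ≠ 0}.Finite) (haj : a j ≠ 0)
    (n : ℕ) (hn : n = 1 ∨ n = 2)
    (δ₀ : ℝ → ℤ)
    (hδ₀ : ∀ θ : ℝ, δ₀ θ ≠ 0 ↔
      ∃ k : ℤ, θ = n * π * k + n * π / 6 ∨ θ = n * π * k - n * π / 6) :
    (∀ i, i ≠ j → δ₀ ((7 * n * π / (6 * p j)) * p i / 7) = 0) ∧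
    (∑ᶠ i, a i * δ₀ ((7 * n * π / (6 * p j)) * p i / 7)) ≠ 0 ∧
    (∀ i, δ₀ ((7 * n * π / (6 * p j) + 2 * π) * p i / 7) = 0) ∧
    (∑ᶠ i, a i * δ₀ ((7 * n * π / (6 * p j) + 2 * π) * p i / 7)) = 0 := by
  have hπ : (π : ℝ) ≠ 0 := Real.pi_ne_zero
  have hn0 : (n : ℝ) ≠ 0 := by rcases hn with h | h <;> simp [h]
  have hnπ : (n : ℝ) * π ≠ 0 := mul_ne_zero hn0 hπ
  have hpj : ((p j : ℕ) : ℝ) ≠ 0 := Nat.cast_ne_zero.2 (by have := hbig j; omega)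
  have h7i : ∀ i, ¬ (7 ∣ p i) := by
    intro i hdvd
    have := (Nat.prime_dvd_prime_iff_eq (by norm_num) (hprime i)).1 hdvd
    have := hbig i; omega
  -- Part 1: off-diagonal terms vanish
  have hzero : ∀ i, i ≠ j → δ₀ ((7 * n * π / (6 * p j)) * p i / 7) = 0 := by
    intro i hij
    by_contra hne
    obtain ⟨k, hk | hk⟩ := (hδ₀ _).1 hne
    · have hr : (p i : ℝ) * (n * π) = ((p j : ℝ) * (6 * k + 1)) * (n * π) := by
        field_simp at hk
        linear_combination (n * π) * hk
      have hr' : (p i : ℝ) = (p j : ℝ) * (6 * k + 1) := mul_right_cancel₀ hnπ hr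
      have hz : (p i : ℤ) = (p j : ℤ) * (6 * k + 1) := by exact_mod_cast hr'
      have hdvd : ((p j : ℤ)) ∣ (p i : ℤ) := ⟨6 * k + 1, hz⟩
      have : p j = p i :=
        (Nat.prime_dvd_prime_iff_eq (hprime j) (hprime i)).1 (by exact_mod_cast hdvd)
      exact hij (hinj this.symm)
    · have hr : (p i : ℝ) * (n * π) = ((p j : ℝ) * (6 * k - 1)) * (n * π) := by
        field_simp at hk
        linear_combination (n * π) * hk
      have hr' : (p i : ℝ) = (p j : ℝ) * (6 * k - 1) := mul_right_cancel₀ hnπ hr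
      have hz : (p i : ℤ) = (p j : ℤ) * (6 * k - 1) := by exact_mod_cast hr'
      have hdvd : ((p j : ℤ)) ∣ (p i : ℤ) := ⟨6 * k - 1, hz⟩
      have : p j = p i :=
        (Nat.prime_dvd_prime_iff_eq (hprime j) (hprime i)).1 (by exact_mod_cast hdvd)
      exact hij (hinj this.symm)
  -- the diagonal term is nonzero
  have hnej : δ₀ ((7 * n * π / (6 * p j)) * p j / 7) ≠ 0 := by
    rw [hδ₀]
    exact ⟨0, Or.inl (by field_simp; ring)⟩
  have hsum1 : (∑ᶠ i, a i * δ₀ ((7 * n * π / (6 * p j)) * p i / 7)) =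
      a j * δ₀ ((7 * n * π / (6 * p j)) * p j / 7) := by
    refine finsum_eq_single _ j ?_
    intro i hij
    rw [hzero i hij, mul_zero]
  -- Part 2: all terms of the shifted sum vanish
  have hzero2 : ∀ i, δ₀ ((7 * n * π / (6 * p j) + 2 * π) * p i / 7) = 0 := by
    intro i
    by_contra hne
    have hdvd : (7 : ℤ) ∣ 12 * ((p i : ℤ) * (p j : ℤ)) := by
      obtain ⟨k, hk | hk⟩ := (hδ₀ _).1 hne
      · have hr : ((7 * n * (p i) + 12 * (p i) * (p j) : ℤ) : ℝ) * π =
            ((42 * n * (p j) * k + 7 * n * (p j) : ℤ) : ℝ) * π := by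
          push_cast
          field_simp at hk
          linear_combination π * hk
        have hz : (7 * n * (p i) + 12 * (p i) * (p j) : ℤ) =
            (42 * n * (p j) * k + 7 * n * (p j) : ℤ) := by
          exact_mod_cast mul_right_cancel₀ hπ hr
        exact ⟨6 * n * (p j) * k + n * (p j) - n * (p i), by linarith⟩
      · have hr : ((7 * n * (p i) + 12 * (p i) * (p j) : ℤ) : ℝ) * π =
            ((42 * n * (p j) * k - 7 * n * (p j) : ℤ) : ℝ) * π := by
          push_cast
          field_simp at hk
          linear_combination π * hk
        have hz : (7 * n * (p i) + 12 * (p i) * (p j) : ℤ) =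
            (42 * n * (p j) * k - 7 * n * (p j) : ℤ) := by
          exact_mod_cast mul_right_cancel₀ hπ hr
        exact ⟨6 * n * (p j) * k - n * (p j) - n * (p i), by linarith⟩
    have h7 : Prime (7 : ℤ) := by norm_num
    rcases h7.dvd_mul.1 hdvd with h | h
    · norm_num at h
    · rcases h7.dvd_mul.1 h with h | h
      · exact h7i i (by exact_mod_cast h)
      · exact h7i j (by exact_mod_cast h)
  refine ⟨hzero, ?_, hzero2, ?_⟩
  · rw [hsum1]
    exact mul_ne_zero haj hnej
  · refine finsum_eq_zero_of_forall_eq_zero ?_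
    intro i
    rw [hzero2 i, mul_zero]
end

section
/- Let A be a rational square matrix with A − εAᵀ nonsingular (ε = ±1), and for a nonzero integer r let i^q_r A denote the |r|n×|r|n block matrix built from |r| copies all with sign sgn(r). Then det(t · (i^q_r A) − ε (i^q_r A)ᵀ) equals det(t^r A − ε Aᵀ) up to multiplication by a unit of ℚ[t, t⁻¹] (i.e., up to ± a power of t). -/
open LaurentPolynomial

/-- The block matrix `i^q_α A` associated to a tuple of signs `s : Fin r → ℤ`:
the `(j,j)` block is `A` if `s j = 1` and `εAᵀ` if `s j = −1`, the blocks above the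
diagonal are `A` and the blocks below are `εAᵀ`. -/
noncomputable def blockRep {R : Type*} [CommRing R] {n r : ℕ} (ε : R) (s : Fin r → ℤ)
    (A : Matrix (Fin n) (Fin n) R) : Matrix (Fin r × Fin n) (Fin r × Fin n) R :=
  fun p q =>
    if p.1 < q.1 then A p.2 q.2
    else if q.1 < p.1 then ε * A q.2 p.2
    else if s p.1 = 1 then A p.2 q.2 else ε * A q.2 p.2

section Core

variable {S : Type*} [CommRing S] {n m : ℕ}

/-- block shift matrix: identity blocks on the superdiagonal. -/
def shiftN (S : Type*) [CommRing S] (n m : ℕ) :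
    Matrix (Fin m × Fin n) (Fin m × Fin n) S :=
  fun p q => if (p.1 : ℕ) + 1 = (q.1 : ℕ) ∧ p.2 = q.2 then 1 else 0

/-- the target block-lower-triangular matrix. -/
def Dmat (u v ε' : S) (A' : Matrix (Fin n) (Fin n) S) (m : ℕ) :
    Matrix (Fin m × Fin n) (Fin m × Fin n) S :=
  fun p q =>
    if (p.1 : ℕ) = m - 1 then
      u * (if (q.1 : ℕ) = m - 1 then A' p.2 q.2 else ε' * A' q.2 p.2)
        - v ^ (q.1 : ℕ) * (ε' * A' q.2 p.2)
    else if p.1 = q.1 then u * (A' p.2 q.2 - ε' * A' q.2 p.2) else 0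

lemma shift_mul (Cm : Matrix (Fin m × Fin n) (Fin m × Fin n) S) (p q : Fin m × Fin n) :
    (shiftN S n m * Cm) p q =
      if h : (p.1 : ℕ) + 1 < m then Cm (⟨(p.1 : ℕ) + 1, h⟩, p.2) q else 0 := by
  rw [Matrix.mul_apply]
  split
  · rename_i h
    rw [Finset.sum_eq_single_of_mem ((⟨(p.1 : ℕ) + 1, h⟩ : Fin m), p.2) (Finset.mem_univ _)]
    · simp [shiftN]
    · intro x _ hx
      rw [shiftN, if_neg, zero_mul]
      rintro ⟨h1, h2⟩
      exact hx (Prod.ext (Fin.ext h1.symm) h2.symm)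
  · rename_i h
    apply Finset.sum_eq_zero
    intro x _
    rw [shiftN, if_neg, zero_mul]
    rintro ⟨h1, _⟩
    exact h (h1 ▸ x.1.isLt)

lemma mul_shift (Dm : Matrix (Fin m × Fin n) (Fin m × Fin n) S) (p q : Fin m × Fin n) :
    (Dm * shiftN S n m) p q =
      if h : 0 < (q.1 : ℕ) then
        Dm p (⟨(q.1 : ℕ) - 1, lt_of_le_of_lt (Nat.pred_le _) q.1.isLt⟩, q.2) else 0 := by
  rw [Matrix.mul_apply]
  split
  · rename_i h
    rw [Finset.sum_eq_single_of_mem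
        ((⟨(q.1 : ℕ) - 1, lt_of_le_of_lt (Nat.pred_le _) q.1.isLt⟩ : Fin m), q.2)
        (Finset.mem_univ _)]
    · simp only [shiftN, Fin.val_mk]
      rw [if_pos ⟨by omega, trivial⟩, mul_one]
    · intro x _ hx
      rw [shiftN, if_neg, mul_zero]
      rintro ⟨h1, h2⟩
      exact hx (Prod.ext (Fin.ext (by simp only [Fin.val_mk]; omega)) h2)
  · rename_i h
    apply Finset.sum_eq_zero
    intro x _
    rw [shiftN, if_neg, mul_zero]
    rintro ⟨h1, _⟩
    omega

end Core

section Core2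

variable {S : Type*} [CommRing S] {n m : ℕ}

lemma key (u v ε' : S) (A' : Matrix (Fin n) (Fin n) S)
    (hε : ε' * ε' = 1) (huv : u * v = 1) :
    (1 - shiftN S n m) *
        (u • blockRep ε' (fun _ : Fin m => (1:ℤ)) A'
          - ε' • (blockRep ε' (fun _ : Fin m => (1:ℤ)) A').transpose)
      = Dmat u v ε' A' m * (1 - v • shiftN S n m) := by
  ext p q
  obtain ⟨i, a⟩ := p
  obtain ⟨j, b⟩ := q
  set Cm := u • blockRep ε' (fun _ : Fin m => (1:ℤ)) A'
      - ε' • (blockRep ε' (fun _ : Fin m => (1:ℤ)) A').transpose with hCm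
  have hL : ((1 - shiftN S n m) * Cm) (i, a) (j, b)
      = Cm (i, a) (j, b) - (shiftN S n m * Cm) (i, a) (j, b) := by
    rw [Matrix.sub_mul, Matrix.one_mul, Matrix.sub_apply]
  have hR : (Dmat u v ε' A' m * (1 - v • shiftN S n m)) (i, a) (j, b)
      = Dmat u v ε' A' m (i, a) (j, b)
        - v * (Dmat u v ε' A' m * shiftN S n m) (i, a) (j, b) := by
    rw [Matrix.mul_sub, Matrix.mul_one, Matrix.mul_smul, Matrix.sub_apply, Matrix.smul_apply,
      smul_eq_mul]
  rw [hL, hR, shift_mul, mul_shift, hCm]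
  by_cases hj0 : 0 < (j : ℕ)
  · rw [dif_pos hj0]
    obtain ⟨k, hk⟩ : ∃ k, (j : ℕ) = k + 1 := ⟨(j : ℕ) - 1, by omega⟩
    by_cases him : (i : ℕ) + 1 < m
    · rw [dif_pos him]
      simp only [Matrix.sub_apply, Matrix.smul_apply, Matrix.transpose_apply, smul_eq_mul,
        blockRep, Dmat, Fin.lt_def, Fin.ext_iff, Fin.val_mk]
      rw [hk]
      simp only [Nat.add_sub_cancel, pow_succ']
      split_ifs <;>
        first
          | omega
          | ring1
          | linear_combination (A' a b - ε' * A' b a) * huv - A' a b * hε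
          | linear_combination (ε' * A' b a) * huv
          | linear_combination -((ε' * A' b a) * huv)
          | linear_combination -((A' a b - ε' * A' b a) * huv - A' a b * hε)
    · rw [dif_neg him]
      simp only [Matrix.sub_apply, Matrix.smul_apply, Matrix.transpose_apply, smul_eq_mul,
        blockRep, Dmat, Fin.lt_def, Fin.ext_iff, Fin.val_mk]
      rw [hk]
      simp only [Nat.add_sub_cancel, pow_succ']
      split_ifs <;>
        first
          | omega
          | ring1
          | linear_combination (A' a b - ε' * A' b a) * huv - A' a b * hε
          | linear_combination (ε' * A' b a) * huv
          | linear_combination -((ε' * A' b a) * huv)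
          | linear_combination -((A' a b - ε' * A' b a) * huv - A' a b * hε)
  · rw [dif_neg hj0]
    have hj : (j : ℕ) = 0 := by omega
    by_cases him : (i : ℕ) + 1 < m
    · rw [dif_pos him]
      simp only [Matrix.sub_apply, Matrix.smul_apply, Matrix.transpose_apply, smul_eq_mul,
        blockRep, Dmat, Fin.lt_def, Fin.ext_iff, Fin.val_mk]
      rw [hj]
      simp only [pow_zero]
      split_ifs <;>
        first
          | omega
          | ring1
          | linear_combination (A' a b - ε' * A' b a) * huv - A' a b * hε
          | linear_combination (ε' * A' b a) * huv
          | linear_combination -((ε' * A' b a) * huv)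
          | linear_combination -((A' a b - ε' * A' b a) * huv - A' a b * hε)
    · rw [dif_neg him]
      simp only [Matrix.sub_apply, Matrix.smul_apply, Matrix.transpose_apply, smul_eq_mul,
        blockRep, Dmat, Fin.lt_def, Fin.ext_iff, Fin.val_mk]
      rw [hj]
      simp only [pow_zero]
      split_ifs <;>
        first
          | omega
          | ring1
          | linear_combination (A' a b - ε' * A' b a) * huv - A' a b * hε
          | linear_combination (ε' * A' b a) * huv
          | linear_combination -((ε' * A' b a) * huv)
          | linear_combination -((A' a b - ε' * A' b a) * huv - A' a b * hε)

end Core2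

section Core3

variable {S : Type*} [CommRing S] {n m : ℕ}

lemma det_one_sub_shift (w : S) :
    ((1 : Matrix (Fin m × Fin n) (Fin m × Fin n) S) - w • shiftN S n m).det = 1 := by
  have hbt : ((1 : Matrix (Fin m × Fin n) (Fin m × Fin n) S) - w • shiftN S n m).BlockTriangular
      Prod.fst := by
    intro p q h
    have h' : (q.1 : ℕ) < (p.1 : ℕ) := h
    rw [Matrix.sub_apply, Matrix.smul_apply, Matrix.one_apply_ne
      (fun e => by rw [e] at h'; omega), shiftN, if_neg (by rintro ⟨h1, _⟩; omega), smul_zero,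
      sub_zero]
  rw [hbt.det]
  apply Finset.prod_eq_one
  intro k _
  have hblock : ((1 : Matrix (Fin m × Fin n) (Fin m × Fin n) S)
      - w • shiftN S n m).toSquareBlock Prod.fst k = 1 := by
    ext ⟨p, hp⟩ ⟨q, hq⟩
    have hpq : (p.1 : ℕ) = (q.1 : ℕ) := by rw [hp, hq]
    simp only [Matrix.toSquareBlock_def, Matrix.of_apply, Matrix.sub_apply, Matrix.smul_apply,
      shiftN, Matrix.one_apply, Subtype.mk_eq_mk]
    rw [if_neg (by rintro ⟨h1, _⟩; omega : ¬((p.1 : ℕ) + 1 = (q.1 : ℕ) ∧ p.2 = q.2)), smul_zero,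
      sub_zero]
  rw [hblock, Matrix.det_one]

lemma dmat_blockTriangular (u v ε' : S) (A' : Matrix (Fin n) (Fin n) S) :
    (Dmat u v ε' A' m).BlockTriangular (fun p => OrderDual.toDual p.1) := by
  intro p q h
  have h' : (p.1 : ℕ) < (q.1 : ℕ) := h
  have hq := q.1.isLt
  simp only [Dmat]
  split_ifs with h1 h2 h3
  · exfalso; omega
  · exfalso; omega
  · exfalso; have := congrArg Fin.val h3; omega
  · rfl

lemma core (hn : 0 < n) (u v ε' : S) (A' : Matrix (Fin n) (Fin n) S)
    (hε : ε' * ε' = 1) (huv : u * v = 1) {m : ℕ} (hm : 0 < m) :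
    (u • blockRep ε' (fun _ : Fin m => (1:ℤ)) A'
        - ε' • (blockRep ε' (fun _ : Fin m => (1:ℤ)) A').transpose).det
      = (A' - ε' • A'.transpose).det ^ (m - 1)
          * ((u ^ m) • A' - ε' • A'.transpose).det := by
  obtain ⟨m', rfl⟩ : ∃ m', m = m' + 1 := ⟨m - 1, by omega⟩
  have hdetkey := congrArg Matrix.det (key u v ε' A' hε huv (m := m' + 1))
  rw [Matrix.det_mul, Matrix.det_mul] at hdetkey
  rw [show (1 : Matrix (Fin (m'+1) × Fin n) (Fin (m'+1) × Fin n) S) - shiftN S n (m'+1)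
      = 1 - (1 : S) • shiftN S n (m'+1) by rw [one_smul], det_one_sub_shift, one_mul,
    det_one_sub_shift, mul_one] at hdetkey
  rw [hdetkey, (dmat_blockTriangular u v ε' A').det]
  have himg : (Finset.univ.image (fun p : Fin (m'+1) × Fin n => OrderDual.toDual p.1))
      = Finset.univ := by
    apply Finset.eq_univ_iff_forall.mpr
    intro k
    exact Finset.mem_image.mpr ⟨(OrderDual.ofDual k, ⟨0, hn⟩), Finset.mem_univ _, rfl⟩
  rw [himg]
  set k0 : (Fin (m'+1))ᵒᵈ := OrderDual.toDual ⟨m', by omega⟩ with hk0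
  rw [← Finset.prod_erase_mul Finset.univ _ (Finset.mem_univ k0)]
  have hdet : ∀ k : (Fin (m'+1))ᵒᵈ,
      ((Dmat u v ε' A' (m'+1)).toSquareBlock (fun p => OrderDual.toDual p.1) k).det
      = (Matrix.of (fun c d : Fin n =>
          Dmat u v ε' A' (m'+1) (OrderDual.ofDual k, c) (OrderDual.ofDual k, d))).det := by
    intro k
    let e : Fin n ≃ {p : Fin (m'+1) × Fin n // (fun p => OrderDual.toDual p.1) p = k} :=
      { toFun := fun c => ⟨(OrderDual.ofDual k, c), rfl⟩
        invFun := fun s => s.1.2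
        left_inv := fun c => rfl
        right_inv := fun s => Subtype.ext (Prod.ext (congrArg OrderDual.ofDual s.2).symm rfl) }
    rw [← Matrix.det_submatrix_equiv_self e]
    congr 1
  -- the last block
  have hlast : ((Dmat u v ε' A' (m'+1)).toSquareBlock (fun p => OrderDual.toDual p.1) k0).det
      = (v ^ m') ^ n * ((u ^ (m'+1)) • A' - ε' • A'.transpose).det := by
    rw [hdet k0]
    have hpow : v ^ m' * u ^ (m'+1) = u := by
      have h1 : (u * v) ^ m' = 1 := by rw [huv, one_pow]
      calc v ^ m' * u ^ (m'+1) = u * (u * v) ^ m' := by ring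
        _ = u := by rw [h1, mul_one]
    have hmat : (Matrix.of (fun c d : Fin n =>
          Dmat u v ε' A' (m'+1) (OrderDual.ofDual k0, c) (OrderDual.ofDual k0, d)))
        = (v ^ m') • ((u ^ (m'+1)) • A' - ε' • A'.transpose) := by
      ext c d
      simp only [Matrix.of_apply, Dmat, Matrix.smul_apply, Matrix.sub_apply,
        Matrix.transpose_apply, smul_eq_mul, hk0, OrderDual.ofDual_toDual]
      simp only [Nat.add_sub_cancel, eq_self_iff_true, if_true]
      linear_combination (-(A' c d)) * hpow
    rw [hmat, Matrix.det_smul, Fintype.card_fin]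
  -- the other blocks
  have hother : ∀ k ∈ Finset.univ.erase k0,
      ((Dmat u v ε' A' (m'+1)).toSquareBlock (fun p => OrderDual.toDual p.1) k).det
        = u ^ n * (A' - ε' • A'.transpose).det := by
    intro k hk
    have hkk : ((OrderDual.ofDual k : Fin (m'+1)) : ℕ) ≠ m' := by
      intro hh
      apply (Finset.mem_erase.mp hk).1
      have : (OrderDual.ofDual k : Fin (m'+1)) = ⟨m', by omega⟩ := Fin.ext hh
      rw [hk0]
      exact congrArg OrderDual.toDual this
    rw [hdet k]
    have hmat : (Matrix.of (fun c d : Fin n =>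
          Dmat u v ε' A' (m'+1) (OrderDual.ofDual k, c) (OrderDual.ofDual k, d)))
        = u • (A' - ε' • A'.transpose) := by
      ext c d
      simp only [Matrix.of_apply, Dmat, Matrix.smul_apply, Matrix.sub_apply,
        Matrix.transpose_apply, smul_eq_mul]
      rw [if_neg (by omega), if_true]
    rw [hmat, Matrix.det_smul, Fintype.card_fin]
  rw [Finset.prod_congr rfl hother, Finset.prod_const, hlast]
  have hcard : (Finset.univ.erase k0).card = m' := by
    rw [Finset.card_erase_of_mem (Finset.mem_univ _), Finset.card_univ]
    rw [Fintype.card_congr (OrderDual.ofDual (α := Fin (m'+1)))]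
    simp
  rw [hcard]
  have hpow1 : (u * v) ^ (n * m') = 1 := by rw [huv, one_pow]
  have : (u ^ n * (A' - ε' • A'.transpose).det) ^ m'
        * ((v ^ m') ^ n * ((u ^ (m'+1)) • A' - ε' • A'.transpose).det)
      = (A' - ε' • A'.transpose).det ^ m' * ((u ^ (m'+1)) • A' - ε' • A'.transpose).det
        * (u * v) ^ (n * m') := by ring
  rw [this, hpow1, mul_one, Nat.add_sub_cancel]

end Core3

section Final

lemma blockRep_neg {S : Type*} [CommRing S] {n m : ℕ} (ε' : S)
    (A' : Matrix (Fin n) (Fin n) S) (hε : ε' * ε' = 1) :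
    blockRep ε' (fun _ : Fin m => (-1 : ℤ)) A'
      = ε' • (blockRep ε' (fun _ : Fin m => (1 : ℤ)) A').transpose := by
  ext p q
  simp only [blockRep, Matrix.smul_apply, Matrix.transpose_apply, smul_eq_mul, Fin.lt_def]
  split_ifs <;>
    first
      | omega
      | exact (by assumption : False).elim
      | ring1
      | linear_combination (A' p.2 q.2) * hε
      | linear_combination (A' q.2 p.2) * hε
      | linear_combination (-(A' p.2 q.2)) * hε
      | linear_combination (-(A' q.2 p.2)) * hε

lemma cm_neg_smul {S : Type*} [CommRing S] {n m : ℕ} (w w' ε' : S)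
    (A' : Matrix (Fin n) (Fin n) S) (hε : ε' * ε' = 1) (hw : w * w' = 1) :
    w • (ε' • (blockRep ε' (fun _ : Fin m => (1 : ℤ)) A').transpose)
        - ε' • (ε' • (blockRep ε' (fun _ : Fin m => (1 : ℤ)) A').transpose).transpose
      = (-w) • (w' • blockRep ε' (fun _ : Fin m => (1 : ℤ)) A'
          - ε' • (blockRep ε' (fun _ : Fin m => (1 : ℤ)) A').transpose) := by
  ext p q
  simp only [Matrix.sub_apply, Matrix.smul_apply, Matrix.transpose_apply, smul_eq_mul, neg_mul,
    neg_sub]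
  linear_combination (blockRep ε' (fun _ : Fin m => (1 : ℤ)) A' p q) * hw
    - (blockRep ε' (fun _ : Fin m => (1 : ℤ)) A' p q) * hε

end Final


/-- for a rational square matrix `A` with `A − εAᵀ` nonsingular
(`ε = ±1`) and a nonzero integer `r`, letting `i^q_r A` be the block matrix built from
`|r|` copies all with sign `sgn r`, the Laurent polynomial
`det(t·(i^q_r A) − ε(i^q_r A)ᵀ)` equals `det(t^r A − ε Aᵀ)` up to multiplication by a
unit of `ℚ[t,t⁻¹]`. -/
theorem alexander_reparametrization {n : ℕ} (A : Matrix (Fin n) (Fin n) ℚ)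
    (ε : ℚ) (hε : ε = 1 ∨ ε = -1)
    (hnd : (A - ε • A.transpose).det ≠ 0)
    (r : ℤ) (hr : r ≠ 0) :
    ∃ u : (LaurentPolynomial ℚ)ˣ,
      ((T 1 : LaurentPolynomial ℚ) • blockRep (C ε) (fun _ : Fin r.natAbs => r.sign) (A.map C) -
        C ε • (blockRep (C ε) (fun _ : Fin r.natAbs => r.sign) (A.map C)).transpose).det =
      (u : LaurentPolynomial ℚ) *
        ((T r : LaurentPolynomial ℚ) • A.map C - C ε • (A.map C).transpose).det := by
  rcases Nat.eq_zero_or_pos n with hn | hn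
  · subst hn
    exact ⟨1, by simp [Matrix.det_isEmpty]⟩
  have hε2 : (C ε : LaurentPolynomial ℚ) * C ε = 1 := by
    rw [← map_mul]
    rcases hε with h | h <;> rw [h] <;> norm_num
  have hdetC : ((A.map C) - (C ε) • (A.map C).transpose).det
      = C ((A - ε • A.transpose).det) := by
    have hA' : (A.map C) - (C ε) • (A.map C).transpose = (A - ε • A.transpose).map C := by
      ext i j
      simp [Matrix.map_apply, Matrix.sub_apply, Matrix.smul_apply, smul_eq_mul, map_sub, map_mul]
    rw [hA', ← RingHom.mapMatrix_apply, ← RingHom.map_det]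
  have hunit : IsUnit (C ((A - ε • A.transpose).det) : LaurentPolynomial ℚ) :=
    (isUnit_iff_ne_zero.mpr hnd).map (C : ℚ →+* LaurentPolynomial ℚ)
  have hm : 0 < r.natAbs := Int.natAbs_pos.mpr hr
  rcases lt_or_gt_of_ne hr with hneg | hpos
  · -- r < 0
    have hsgn : (fun _ : Fin r.natAbs => r.sign) = (fun _ => (-1 : ℤ)) :=
      funext fun _ => Int.sign_eq_neg_one_of_neg hneg
    rw [hsgn, blockRep_neg (C ε) (A.map C) hε2,
      cm_neg_smul (T 1) (T (-1)) (C ε) (A.map C) hε2 (by rw [← T_add]; norm_num),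
      Matrix.det_smul,
      core hn (T (-1)) (T 1) (C ε) (A.map C) hε2 (by rw [← T_add]; norm_num) hm]
    have hTpow : (T (-1) : LaurentPolynomial ℚ) ^ r.natAbs = T r := by
      rw [T_pow]
      congr 1
      omega
    rw [hTpow, hdetC]
    refine ⟨((isUnit_T (R := ℚ) 1).neg.unit) ^ (Fintype.card (Fin r.natAbs × Fin n))
      * hunit.unit ^ (r.natAbs - 1), ?_⟩
    simp only [Units.val_mul, Units.val_pow_eq_pow_val, IsUnit.unit_spec]
    ring
  · -- r > 0
    have hsgn : (fun _ : Fin r.natAbs => r.sign) = (fun _ => (1 : ℤ)) :=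
      funext fun _ => Int.sign_eq_one_of_pos hpos
    rw [hsgn, core hn (T 1) (T (-1)) (C ε) (A.map C) hε2 (by rw [← T_add]; norm_num) hm]
    have hTpow : (T 1 : LaurentPolynomial ℚ) ^ r.natAbs = T r := by
      rw [T_pow]
      congr 1
      omega
    rw [hTpow, hdetC]
    exact ⟨hunit.unit ^ (r.natAbs - 1), by
      simp only [Units.val_pow_eq_pow_val, IsUnit.unit_spec]⟩
end

section
/- Let c ≥ 2 be an integer. Let P be the (c−1)×(c−1) rational matrix with P_{ij} = −i/c if j ≥ i and P_{ij} = (c−i)/c if j < i, and let Q be the (c−1)×(c−1) rational matrix with Q_{ij} = (c−j)/c if j ≥ i and Q_{ij} = −j/c if j < i. Then both P and Q are nonsingular over ℚ. -/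
/-- for an integer `c ≥ 2`, the `(c−1)×(c−1)` rational matrices `P` and
`Q` with entries (indices `i, j = 1,…,c−1`) `P_{ij} = −i/c` for `j ≥ i`,
`P_{ij} = (c−i)/c` for `j < i`, and `Q_{ij} = (c−j)/c` for `j ≥ i`, `Q_{ij} = −j/c` for
`j < i`, are both nonsingular over `ℚ`. -/
theorem connected_sum_blocks_nonsingular (c : ℕ) (hc : 2 ≤ c) :
    (Matrix.det (fun i j : Fin (c - 1) =>
      if (i : ℕ) ≤ (j : ℕ) then -(((i : ℕ) + 1 : ℚ)) / c
      else ((c : ℚ) - ((i : ℕ) + 1)) / c) ≠ 0) ∧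
    (Matrix.det (fun i j : Fin (c - 1) =>
      if (i : ℕ) ≤ (j : ℕ) then ((c : ℚ) - ((j : ℕ) + 1)) / c
      else -(((j : ℕ) + 1 : ℚ)) / c) ≠ 0) := by
  have hc0 : (c : ℚ) ≠ 0 := by
    exact Nat.cast_ne_zero.mpr (by omega)
  have hn1 : 1 ≤ c - 1 := by omega
  constructor
  · -- P
    intro hdet
    obtain ⟨v, hv0, hv⟩ := Matrix.exists_mulVec_eq_zero_iff.2 hdet
    set P : Matrix (Fin (c-1)) (Fin (c-1)) ℚ := (fun i j : Fin (c - 1) =>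
      if (i : ℕ) ≤ (j : ℕ) then -(((i : ℕ) + 1 : ℚ)) / c
      else ((c : ℚ) - ((i : ℕ) + 1)) / c) with hP
    have hrow : ∀ i : Fin (c-1), ∑ j, P i j * v j = 0 := by
      intro i
      have := congrFun hv i
      simpa [Matrix.mulVec, dotProduct] using this
    have hS : ∑ j, v j = 0 := by
      have h0 := hrow ⟨0, by omega⟩
      simp only [hP, Fin.val_mk, Nat.zero_le, if_true, Nat.cast_zero, zero_add] at h0
      rw [← Finset.mul_sum] at h0
      have : (-1 : ℚ) / c ≠ 0 := by
        simp [hc0]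
      rcases mul_eq_zero.1 h0 with h | h
      · exact absurd h this
      · exact h
    have vzero : ∀ i : Fin (c-1), (i : ℕ) + 1 < c - 1 → v i = 0 := by
      intro i hi
      set i' : Fin (c-1) := ⟨(i : ℕ) + 1, hi⟩ with hi'
      have hd : ∑ j, (P i j - P i' j) * v j = 0 := by
        simp only [sub_mul, Finset.sum_sub_distrib]
        rw [hrow i, hrow i', sub_zero]
      have hpw : ∀ j : Fin (c-1), P i j - P i' j
          = 1 / c - (if j = i then (1:ℚ) else 0) := by
        intro j
        have hij : ((i' : Fin (c-1)) : ℕ) = (i : ℕ) + 1 := rfl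
        simp only [hP, hij, Fin.ext_iff]
        rcases lt_trichotomy (j : ℕ) (i : ℕ) with h | h | h
        · rw [if_neg (by omega), if_neg (by omega), if_neg (by omega)]
          push_cast
          field_simp
          ring
        · rw [if_pos (by omega), if_neg (by omega), if_pos (by omega)]
          push_cast
          field_simp
          ring
        · rw [if_pos (by omega), if_pos (by omega), if_neg (by omega)]
          push_cast
          field_simp
          ring
      rw [Finset.sum_congr rfl (fun j _ => by rw [hpw j])] at hd
      simp only [sub_mul, Finset.sum_sub_distrib, ← Finset.mul_sum, hS, mul_zero,
        ite_mul, one_mul, zero_mul, Finset.sum_ite_eq', Finset.mem_univ, if_true] at hd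
      linarith
    apply hv0
    funext i
    by_cases hi : (i : ℕ) + 1 < c - 1
    · exact vzero i hi
    · have hi' : (i : ℕ) = c - 1 - 1 := by omega
      have := hS
      rw [Finset.sum_eq_single i (fun j _ hj => vzero j (by
        have : (j : ℕ) ≠ (i : ℕ) := fun h => hj (Fin.ext h)
        omega)) (fun h => absurd (Finset.mem_univ i) h)] at this
      exact this
  · -- Q
    intro hdet
    obtain ⟨v, hv0, hv⟩ := Matrix.exists_mulVec_eq_zero_iff.2 hdet
    set Q : Matrix (Fin (c-1)) (Fin (c-1)) ℚ := (fun i j : Fin (c - 1) =>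
      if (i : ℕ) ≤ (j : ℕ) then ((c : ℚ) - ((j : ℕ) + 1)) / c
      else -(((j : ℕ) + 1 : ℚ)) / c) with hQ
    have hrow : ∀ i : Fin (c-1), ∑ j, Q i j * v j = 0 := by
      intro i
      have := congrFun hv i
      simpa [Matrix.mulVec, dotProduct] using this
    have vzero : ∀ i : Fin (c-1), (i : ℕ) + 1 < c - 1 → v i = 0 := by
      intro i hi
      set i' : Fin (c-1) := ⟨(i : ℕ) + 1, hi⟩ with hi'
      have hd : ∑ j, (Q i j - Q i' j) * v j = 0 := by
        simp only [sub_mul, Finset.sum_sub_distrib]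
        rw [hrow i, hrow i', sub_zero]
      have hpw : ∀ j : Fin (c-1), Q i j - Q i' j
          = if j = i then (1:ℚ) else 0 := by
        intro j
        have hij : ((i' : Fin (c-1)) : ℕ) = (i : ℕ) + 1 := rfl
        simp only [hQ, hij, Fin.ext_iff]
        rcases lt_trichotomy (j : ℕ) (i : ℕ) with h | h | h
        · rw [if_neg (by omega), if_neg (by omega), if_neg (by omega)]
          ring
        · rw [if_pos (by omega), if_neg (by omega), if_pos (by omega)]
          field_simp
          ring
        · rw [if_pos (by omega), if_pos (by omega), if_neg (by omega)]
          ring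
      rw [Finset.sum_congr rfl (fun j _ => by rw [hpw j])] at hd
      simpa using hd
    apply hv0
    funext i
    by_cases hi : (i : ℕ) + 1 < c - 1
    · exact vzero i hi
    · have hi' : (i : ℕ) = c - 1 - 1 := by omega
      have hlast := hrow i
      rw [Finset.sum_eq_single i (fun j _ hj => by
        rw [vzero j (by
          have : (j : ℕ) ≠ (i : ℕ) := fun h => hj (Fin.ext h)
          omega), mul_zero]) (fun h => absurd (Finset.mem_univ i) h)] at hlast
      have hQii : Q i i = 1 / c := by
        simp only [hQ, le_refl, if_true, hi']
        have : ((c : ℚ) - ((c - 1 - 1 : ℕ) + 1)) = 1 := by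
          have h2 : ((c - 1 - 1 : ℕ) : ℚ) = (c : ℚ) - 2 := by
            push_cast [Nat.cast_sub (by omega : 1 ≤ c - 1), Nat.cast_sub (by omega : 1 ≤ c)]
            ring
          rw [h2]; ring
        rw [this]
      rw [hQii] at hlast
      have : (1 : ℚ) / c ≠ 0 := by simp [hc0]
      rcases mul_eq_zero.1 hlast with h | h
      · exact absurd h this
      · exact h
end
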